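/- arXiv:2306.09730 — 4 statements merged into one kernel-verified Lean document; each statement's English description precedes it below -/
import Mathlib

section
/- Let R be a supercommutative ℂ-algebra with even part R₀ (central) and odd part R₁ (whose elements pairwise anticommute, hence square to zero). Suppose a,b,c,d,e ∈ R₀ and α,β,γ,δ ∈ R₁ satisfy ad − bc − γδ = 1, e² + 2αβ = 1, cα − aβ = eγ, and dα − bβ = eδ. Then αβγδ = 0 and αβ = γδ. -/
/-- A supercommutative ℂ-algebra `R = R₀ ⊕ R₁`: the even part `R₀` is central,
products of odd elements are even, and odd elements pairwise anticommute
(hence square to zero, since `R` is a ℂ-algebra). -/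
structure SuperCommAlgebra (R : Type*) [Ring R] [Algebra ℂ R] where
  even : Submodule ℂ R
  odd : Submodule ℂ R
  one_mem : (1 : R) ∈ even
  even_central : ∀ x ∈ even, ∀ y : R, x * y = y * x
  even_mul_even : ∀ x ∈ even, ∀ y ∈ even, x * y ∈ even
  even_mul_odd : ∀ x ∈ even, ∀ y ∈ odd, x * y ∈ odd
  odd_mul_odd : ∀ x ∈ odd, ∀ y ∈ odd, x * y ∈ even
  odd_anticomm : ∀ x ∈ odd, ∀ y ∈ odd, x * y = -(y * x)
  isCompl : IsCompl even odd

theorem spgl21_relations_imply_abgd_zero_and_ab_eq_gd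
    {R : Type*} [Ring R] [Algebra ℂ R] (A : SuperCommAlgebra R)
    (a b c d e α β γ δ : R)
    (ha : a ∈ A.even) (hb : b ∈ A.even) (hc : c ∈ A.even) (hd : d ∈ A.even)
    (he : e ∈ A.even)
    (hα : α ∈ A.odd) (hβ : β ∈ A.odd) (hγ : γ ∈ A.odd) (hδ : δ ∈ A.odd)
    (h1 : a * d - b * c - γ * δ = 1)
    (h2 : e * e + 2 * (α * β) = 1)
    (h3 : c * α - a * β = e * γ)
    (h4 : d * α - b * β = e * δ) :
    α * β * (γ * δ) = 0 ∧ α * β = γ * δ := by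
  -- odd elements square to zero
  have sq : ∀ x ∈ A.odd, x * x = 0 := by
    intro x hx
    have h := A.odd_anticomm x hx x hx
    have h2' : (2:ℂ) • (x*x) = 0 := by
      rw [two_smul]; exact eq_neg_iff_add_eq_zero.mp h
    have h3' : x*x = (2:ℂ)⁻¹ • ((2:ℂ) • (x*x)) := by
      rw [smul_smul]; norm_num
    rw [h3', h2', smul_zero]
  have hαα : α * α = 0 := sq α hα
  have hββ : β * β = 0 := sq β hβ
  -- (p x)(q y) = (p q)(x y) for p,q even
  have key : ∀ p ∈ A.even, ∀ q ∈ A.even, ∀ x : R, ∀ y : R,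
      (p*x)*(q*y) = (p*q)*(x*y) := by
    intro p hp q hq x y
    rw [mul_assoc, ← mul_assoc x q y, ← A.even_central q hq x, mul_assoc q x y,
      ← mul_assoc]
  have hβα : β * α = -(α * β) := A.odd_anticomm β hβ α hα
  have hab_even : α * β ∈ A.even := A.odd_mul_odd α hα β hβ
  have central_ab := A.even_central _ hab_even
  -- (αβ)² = 0
  have hab2 : (α*β)*(α*β) = 0 := by
    have h' : (α*β)*(α*β) = α*(β*α)*β := by noncomm_ring
    rw [hβα] at h'
    rw [h']
    have h'' : α*(-(α*β))*β = -((α*α)*(β*β)) := by noncomm_ring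
    rw [h'', hαα, zero_mul, neg_zero]
  -- main identity: e²(γδ) = (ad - bc)(αβ)
  have E1 : (e*e)*(γ*δ) = (a*d - b*c)*(α*β) := by
    calc (e*e)*(γ*δ) = (e*γ)*(e*δ) := (key e he e he γ δ).symm
      _ = (c*α - a*β)*(d*α - b*β) := by rw [h3, h4]
      _ = (c*α)*(d*α) - (c*α)*(b*β) - ((a*β)*(d*α) - (a*β)*(b*β)) := by
          noncomm_ring
      _ = (c*d)*(α*α) - (c*b)*(α*β) - ((a*d)*(β*α) - (a*b)*(β*β)) := by
          rw [key c hc d hd α α, key c hc b hb α β, key a ha d hd β α,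
            key a ha b hb β β]
      _ = (a*d - b*c)*(α*β) := by
          rw [hαα, hββ, hβα, A.even_central c hc b]
          noncomm_ring
  have he2 : e*e = 1 - 2*(α*β) := eq_sub_of_add_eq h2
  have hadbc : a*d - b*c = 1 + γ*δ := sub_eq_iff_eq_add.mp h1
  rw [he2, hadbc] at E1
  -- E1 : (1 - 2*(α*β))*(γ*δ) = (1 + γ*δ)*(α*β)
  have h6 : γ*δ - 2*((α*β)*(γ*δ)) = α*β + (α*β)*(γ*δ) := by
    calc γ*δ - 2*((α*β)*(γ*δ)) = (1 - 2*(α*β))*(γ*δ) := by noncomm_ring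
      _ = (1 + γ*δ)*(α*β) := E1
      _ = α*β + (α*β)*(γ*δ) := by
          rw [add_mul, one_mul, ← central_ab (γ*δ)]
  have h7 : (α*β)*(γ*δ - 2*((α*β)*(γ*δ))) = (α*β)*(α*β + (α*β)*(γ*δ)) := by
    rw [h6]
  have h8 : (α*β)*(γ*δ - 2*((α*β)*(γ*δ)))
      = (α*β)*(γ*δ) - 2*(((α*β)*(α*β))*(γ*δ)) := by noncomm_ring
  have h9 : (α*β)*(α*β + (α*β)*(γ*δ))
      = (α*β)*(α*β) + ((α*β)*(α*β))*(γ*δ) := by noncomm_ring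
  rw [h8, h9, hab2] at h7
  simp only [zero_mul, mul_zero, sub_zero, add_zero, zero_add] at h7
  rw [h7] at h6
  simp only [mul_zero, sub_zero, add_zero] at h6
  exact ⟨h7, h6.symm⟩
end

section
/- Let R be a supercommutative ℂ-algebra and suppose a,b,c,d,e ∈ R₀ and α,β,γ,δ ∈ R₁ satisfy ad − bc − γδ = 1, e² + 2αβ = 1, cα − aβ = eγ, dα − bβ = eδ, and assume e is invertible in R. Then eα = aδ − bγ and eβ = cδ − dγ. -/
theorem spgl21_relations_imply_ealpha_ebeta
    {R : Type*} [Ring R] [Algebra ℂ R] (A : SuperCommAlgebra R)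
    (a b c d e α β γ δ : R)
    (ha : a ∈ A.even) (hb : b ∈ A.even) (hc : c ∈ A.even) (hd : d ∈ A.even)
    (he : e ∈ A.even)
    (hα : α ∈ A.odd) (hβ : β ∈ A.odd) (hγ : γ ∈ A.odd) (hδ : δ ∈ A.odd)
    (h1 : a * d - b * c - γ * δ = 1)
    (h2 : e * e + 2 * (α * β) = 1)
    (h3 : c * α - a * β = e * γ)
    (h4 : d * α - b * β = e * δ)
    (heu : IsUnit e) :
    e * α = a * δ - b * γ ∧ e * β = c * δ - d * γ := by
  -- odd elements square to zero
  have hsq : ∀ x ∈ A.odd, x * x = 0 := by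
    intro x hx
    have h := A.odd_anticomm x hx x hx
    have h2' : (2 : ℂ) • (x * x) = 0 := by
      rw [two_smul]
      nth_rewrite 1 [h]
      exact neg_add_cancel _
    have := congrArg (fun z => (2⁻¹ : ℂ) • z) h2'
    simpa [smul_smul] using this
  have hαα : α * α = 0 := hsq α hα
  have hββ : β * β = 0 := hsq β hβ
  have hγγ : γ * γ = 0 := hsq γ hγ
  have hδδ : δ * δ = 0 := hsq δ hδ
  have hβα : β * α = -(α * β) := A.odd_anticomm β hβ α hα
  have hδγ : δ * γ = -(γ * δ) := A.odd_anticomm δ hδ γ hγ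
  -- key mixing lemma: evens pull out of products
  have mix : ∀ x ∈ A.even, ∀ y ∈ A.even, ∀ u v : R,
      (x * u) * (y * v) = (x * y) * (u * v) := by
    intro x hx y hy u v
    rw [mul_assoc, mul_assoc, ← mul_assoc u y v, ← A.even_central y hy u,
      mul_assoc y u v, ← mul_assoc x y (u * v)]
  -- squares of the even products αβ, γδ
  have hPα : (α * β) * α = 0 := by
    rw [mul_assoc, hβα, mul_neg, ← mul_assoc, hαα, zero_mul, neg_zero]
  have hPβ : (α * β) * β = 0 := by rw [mul_assoc, hββ, mul_zero]
  have hQγ : (γ * δ) * γ = 0 := by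
    rw [mul_assoc, hδγ, mul_neg, ← mul_assoc, hγγ, zero_mul, neg_zero]
  have hQδ : (γ * δ) * δ = 0 := by rw [mul_assoc, hδδ, mul_zero]
  have hQQ : (γ * δ) * (γ * δ) = 0 := by rw [← mul_assoc, hQγ, zero_mul]
  -- commuting facts
  have hcb : c * b = b * c := A.even_central c hc b
  have hdc : d * c = c * d := A.even_central d hd c
  have hQP : (γ * δ) * (α * β) = (α * β) * (γ * δ) :=
    A.even_central (γ * δ) (A.odd_mul_odd γ hγ δ hδ) (α * β)
  -- product (eγ)(eδ) two ways
  have E1 : (c * α - a * β) * (d * α - b * β) = (a * d - b * c) * (α * β) := by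
    rw [sub_mul, mul_sub, mul_sub, mix c hc d hd α α, mix c hc b hb α β,
      mix a ha d hd β α, mix a ha b hb β β, hαα, hββ, hβα, mul_zero, mul_zero,
      mul_neg, hcb]
    noncomm_ring
  have E2 : (e * γ) * (e * δ) = (e * e) * (γ * δ) := mix e he e he γ δ
  have Ekey : (a * d - b * c) * (α * β) = (e * e) * (γ * δ) := by
    rw [← E1, h3, h4, E2]
  have had : a * d - b * c = 1 + γ * δ := by
    rw [sub_eq_iff_eq_add] at h1; exact h1
  have hee : e * e = 1 - 2 * (α * β) := by
    rw [eq_sub_iff_add_eq]; exact h2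
  -- P + PQ = Q - 2 PQ
  have eq3 : α * β + (α * β) * (γ * δ) =
      γ * δ - 2 * (α * β) * (γ * δ) := by
    have := Ekey
    rw [had, hee] at this
    rw [add_mul, one_mul, hQP, sub_mul, one_mul] at this
    exact this
  have hδγδ : δ * (γ * δ) = 0 := by
    rw [← mul_assoc, hδγ, neg_mul, mul_assoc, hδδ, mul_zero, neg_zero]
  -- multiply eq3 on the right by γδ to get PQ = 0
  have hPQ0 : (α * β) * (γ * δ) = 0 := by
    have h5 := congrArg (fun z => z * (γ * δ)) eq3
    simp only [add_mul, sub_mul, mul_assoc, hδγδ, mul_zero, add_zero,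
      sub_zero, zero_sub] at h5
    rw [mul_assoc]
    simpa [hδγδ, mul_zero] using h5
  have hPQeq : α * β = γ * δ := by
    have := eq3
    rw [mul_assoc 2, hPQ0, mul_zero, add_zero, sub_zero] at this
    exact this
  have hQα : (γ * δ) * α = 0 := by rw [← hPQeq, hPα]
  have hQβ : (γ * δ) * β = 0 := by rw [← hPQeq, hPβ]
  -- e * (e * α) = α
  have L2 : e * (e * α) = α := by
    rw [← mul_assoc, hee, sub_mul, one_mul, mul_assoc, hPα, mul_zero, sub_zero]
  have L2' : e * (e * β) = β := by
    rw [← mul_assoc, hee, sub_mul, one_mul, mul_assoc, hPβ, mul_zero, sub_zero]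
  -- e * (aδ - bγ) = α
  have L1 : e * (a * δ - b * γ) = α := by
    have hea : e * (a * δ) = a * (e * δ) := by
      rw [← mul_assoc, ← A.even_central a ha e, mul_assoc]
    have heb : e * (b * γ) = b * (e * γ) := by
      rw [← mul_assoc, ← A.even_central b hb e, mul_assoc]
    rw [mul_sub, hea, heb, ← h3, ← h4, mul_sub, mul_sub,
      ← mul_assoc, ← mul_assoc, ← mul_assoc, ← mul_assoc,
      A.even_central b hb a]
    have : a * d * α - b * c * α = (a * d - b * c) * α := by noncomm_ring
    have goal1 : a * d * α - a * b * β - (b * c * α - a * b * β) = α := by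
      rw [show a * d * α - a * b * β - (b * c * α - a * b * β)
          = (a * d - b * c) * α by noncomm_ring, had, add_mul, one_mul, hQα,
        add_zero]
    exact goal1
  -- e * (cδ - dγ) = β
  have L1' : e * (c * δ - d * γ) = β := by
    have hec : e * (c * δ) = c * (e * δ) := by
      rw [← mul_assoc, ← A.even_central c hc e, mul_assoc]
    have hed : e * (d * γ) = d * (e * γ) := by
      rw [← mul_assoc, ← A.even_central d hd e, mul_assoc]
    rw [mul_sub, hec, hed, ← h3, ← h4, mul_sub, mul_sub,
      ← mul_assoc, ← mul_assoc, ← mul_assoc, ← mul_assoc, hdc]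
    rw [show c * d * α - c * b * β - (c * d * α - d * a * β)
        = (d * a - c * b) * β by noncomm_ring,
      A.even_central d hd a, A.even_central c hc b, had, add_mul, one_mul,
      hQβ, add_zero]
  constructor
  · exact heu.mul_left_cancel (L2.trans L1.symm)
  · exact heu.mul_left_cancel (L2'.trans L1'.symm)
end

section
/- Let R be a supercommutative ℂ-algebra, a,b,c,d ∈ R₀, α,β,γ,δ ∈ R₁ satisfying ad − bc − γδ = 1, cα − aβ = (1−αβ)γ, dα − bβ = (1−αβ)δ, and set e = 1 − αβ. Then the matrix L with rows (a,c,γ), (b,d,δ), (α,β,e) factors as L = L₁·L₂, where L₁ has rows (a(1−αβ/2), c(1−αβ/2), 0), (b(1−αβ/2), d(1−αβ/2), 0), (0,0,1), and L₂ has rows (1+αβ/2, 0, −β), (0, 1+αβ/2, α), (α, β, 1−αβ). Moreover the determinant of the upper-left 2×2 block of L₁ equals 1. -/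
theorem sc_p11_sl2_susy_factorization
    {R : Type*} [Ring R] [Algebra ℂ R] (A : SuperCommAlgebra R)
    (a b c d α β γ δ : R)
    (ha : a ∈ A.even) (hb : b ∈ A.even) (hc : c ∈ A.even) (hd : d ∈ A.even)
    (hα : α ∈ A.odd) (hβ : β ∈ A.odd) (hγ : γ ∈ A.odd) (hδ : δ ∈ A.odd)
    (h1 : a * d - b * c - γ * δ = 1)
    (h3 : c * α - a * β = (1 - α * β) * γ)
    (h4 : d * α - b * β = (1 - α * β) * δ) :
    !![a, c, γ; b, d, δ; α, β, 1 - α * β] =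
      !![a * (1 - (2:ℂ)⁻¹ • (α * β)), c * (1 - (2:ℂ)⁻¹ • (α * β)), 0;
         b * (1 - (2:ℂ)⁻¹ • (α * β)), d * (1 - (2:ℂ)⁻¹ • (α * β)), 0;
         0, 0, 1] *
      !![1 + (2:ℂ)⁻¹ • (α * β), 0, -β;
         0, 1 + (2:ℂ)⁻¹ • (α * β), α;
         α, β, 1 - α * β] ∧
    (a * (1 - (2:ℂ)⁻¹ • (α * β))) * (d * (1 - (2:ℂ)⁻¹ • (α * β))) -
      (c * (1 - (2:ℂ)⁻¹ • (α * β))) * (b * (1 - (2:ℂ)⁻¹ • (α * β))) = 1 := by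
  -- squares of odd elements vanish
  have sq : ∀ x ∈ A.odd, x * x = 0 := by
    intro x hx
    have h := A.odd_anticomm x hx x hx
    rw [eq_neg_iff_add_eq_zero] at h
    have h2 : (2:ℂ) • (x * x) = 0 := by rw [two_smul]; exact h
    calc x * x = (2:ℂ)⁻¹ • ((2:ℂ) • (x * x)) := by rw [smul_smul]; norm_num
      _ = 0 := by rw [h2, smul_zero]
  have hαα : α * α = 0 := sq α hα
  have hββ : β * β = 0 := sq β hβ
  have hba : β * α = -(α * β) := A.odd_anticomm β hβ α hα
  -- commute-out lemmas for even elements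
  have ha' : ∀ x y : R, x * (a * y) = a * (x * y) := fun x y => by
    rw [← mul_assoc, ← A.even_central a ha x, mul_assoc]
  have hb' : ∀ x y : R, x * (b * y) = b * (x * y) := fun x y => by
    rw [← mul_assoc, ← A.even_central b hb x, mul_assoc]
  have hc' : ∀ x y : R, x * (c * y) = c * (x * y) := fun x y => by
    rw [← mul_assoc, ← A.even_central c hc x, mul_assoc]
  have hd' : ∀ x y : R, x * (d * y) = d * (x * y) := fun x y => by
    rw [← mul_assoc, ← A.even_central d hd x, mul_assoc]
  have htα : α * β * α = 0 := by
    rw [mul_assoc, hba, mul_neg, ← mul_assoc, hαα, zero_mul, neg_zero]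
  have htβ : α * β * β = 0 := by rw [mul_assoc, hββ, mul_zero]
  have htt : (α * β) * (α * β) = 0 := by
    rw [mul_assoc α β (α * β), ← mul_assoc β α β, hba, neg_mul, mul_assoc α β β, hββ,
      mul_zero, neg_zero, mul_zero]
  -- α β γ = 0 and α β δ = 0
  have htγ : α * β * γ = 0 := by
    have e1 : α * β * (c * α - a * β) = α * β * ((1 - α * β) * γ) := by rw [h3]
    rw [mul_sub, hc' (α * β) α, htα, mul_zero, ha' (α * β) β, htβ, mul_zero, sub_zero,
      sub_mul, one_mul, mul_sub, ← mul_assoc, ← mul_assoc, htα, zero_mul, zero_mul, sub_zero] at e1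
    exact e1.symm
  have htδ : α * β * δ = 0 := by
    have e1 : α * β * (d * α - b * β) = α * β * ((1 - α * β) * δ) := by rw [h4]
    rw [mul_sub, hd' (α * β) α, htα, mul_zero, hb' (α * β) β, htβ, mul_zero, sub_zero,
      sub_mul, one_mul, mul_sub, ← mul_assoc, ← mul_assoc, htα, zero_mul, zero_mul, sub_zero] at e1
    exact e1.symm
  have hγ' : c * α - a * β = γ := by
    rw [h3, sub_mul, one_mul, htγ, sub_zero]
  have hδ' : d * α - b * β = δ := by
    rw [h4, sub_mul, one_mul, htδ, sub_zero]
  -- γ δ = (a d) (αβ) - (c b) (αβ)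
  have hγδ1 : γ * δ = a * (d * (α * β)) - c * (b * (α * β)) := by
    rw [← hγ', ← hδ', sub_mul, mul_sub, mul_sub]
    have e1 : c * α * (d * α) = 0 := by
      rw [mul_assoc, hd' α α, hαα, mul_zero, mul_zero]
    have e2 : c * α * (b * β) = c * (b * (α * β)) := by
      rw [mul_assoc, hb' α β]
    have e3 : a * β * (d * α) = -(a * (d * (α * β))) := by
      rw [mul_assoc, hd' β α, hba, mul_neg, mul_neg]
    have e4 : a * β * (b * β) = 0 := by
      rw [mul_assoc, hb' β β, hββ, mul_zero, mul_zero]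
    rw [e1, e2, e3, e4, zero_sub, sub_zero, sub_neg_eq_add]
    abel
  -- γ δ (α β) = 0
  have hγδt : γ * δ * (α * β) = 0 := by
    rw [hγδ1, sub_mul, mul_assoc a (d * (α * β)), mul_assoc d, htt, mul_zero, mul_zero,
      mul_assoc c (b * (α * β)), mul_assoc b, htt, mul_zero, mul_zero, sub_zero]
  -- γ δ = α β
  have hγδ : γ * δ = α * β := by
    have had : a * d = 1 + b * c + γ * δ := by
      have := h1
      linear_combination (norm := abel) h1
    calc γ * δ = a * (d * (α * β)) - c * (b * (α * β)) := hγδ1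
      _ = (a * d) * (α * β) - (c * b) * (α * β) := by rw [mul_assoc, mul_assoc]
      _ = (1 + b * c + γ * δ) * (α * β) - (b * c) * (α * β) := by
          rw [had, A.even_central c hc b]
      _ = α * β + (b * c) * (α * β) + γ * δ * (α * β) - (b * c) * (α * β) := by
          rw [add_mul, add_mul, one_mul]
      _ = α * β := by rw [hγδt]; abel
  have h1' : a * d - b * c = 1 + α * β := by
    rw [← hγδ]; linear_combination (norm := abel) h1
  -- facts about h = (2:ℂ)⁻¹ • (α*β)
  set s : R := (2:ℂ)⁻¹ • (α * β) with hs
  have hmem : s ∈ A.even := Submodule.smul_mem _ _ (A.odd_mul_odd α hα β hβ)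
  have hss : s + s = α * β := by
    rw [hs, ← two_smul ℂ, smul_smul]; norm_num
  have hs2 : s * s = 0 := by
    rw [hs, smul_mul_assoc, mul_smul_comm, htt, smul_zero, smul_zero]
  have hsα : s * α = 0 := by rw [hs, smul_mul_assoc, htα, smul_zero]
  have hsβ : s * β = 0 := by rw [hs, smul_mul_assoc, htβ, smul_zero]
  have hone : (1 - s) * (1 + s) = 1 := by
    rw [sub_mul, one_mul, mul_add, mul_one, hs2, add_zero, add_sub_cancel_right]
  have hsq : (1 - s) * (1 - s) = 1 - α * β := by
    rw [sub_mul, one_mul, mul_sub, mul_one, hs2, sub_zero, ← hss]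
    abel
  have h1β : (1 - s) * β = β := by rw [sub_mul, one_mul, hsβ, sub_zero]
  have h1α : (1 - s) * α = α := by rw [sub_mul, one_mul, hsα, sub_zero]
  constructor
  · ext i j
    fin_cases i <;> fin_cases j <;>
      simp [Matrix.mul_apply, Fin.sum_univ_three]
    · rw [mul_assoc, hone, mul_one]
    · rw [mul_assoc, hone, mul_one]
    · rw [mul_assoc a, h1β, mul_assoc c, h1α, ← hγ']
      abel
    · rw [mul_assoc, hone, mul_one]
    · rw [mul_assoc, hone, mul_one]
    · rw [mul_assoc b, h1β, mul_assoc d, h1α, ← hδ']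
      abel
  · have e1 : a * (1 - s) * (d * (1 - s)) = (a * d) * (1 - α * β) := by
      rw [mul_assoc, hd' (1 - s) (1 - s), hsq, ← mul_assoc]
    have e2 : c * (1 - s) * (b * (1 - s)) = (b * c) * (1 - α * β) := by
      rw [mul_assoc, hb' (1 - s) (1 - s), hsq, ← mul_assoc, A.even_central c hc b]
    rw [e1, e2, ← sub_mul, h1', add_mul, one_mul, mul_sub, mul_one, htt, sub_zero]
    abel
end

section
/- Let R be a supercommutative ℂ-algebra, a,b,c,d,e ∈ R₀, α,β,γ,δ ∈ R₁ satisfying ad − bc − γδ = 1, e² + 2αβ = 1, cα − aβ = eγ, and dα − bβ = eδ. Let z ∈ R₀, θ ∈ R₁, and assume both cz + d and e are invertible. Then (γz + δ + θe)·(cz + d + θβ)⁻¹ = (γz+δ)(cz+d)⁻¹ + θ·(1 − γδ)·e⁻¹·(cz+d)⁻¹. -/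
namespace SuperCommAlgebra

variable {R : Type*} [Ring R] [Algebra ℂ R] (A : SuperCommAlgebra R)

theorem odd_sq {x : R} (hx : x ∈ A.odd) : x * x = 0 := by
  have h := A.odd_anticomm x hx x hx
  have h2 : (2:ℂ) • (x*x) = 0 := by
    rw [two_smul]; nth_rewrite 1 [h]; exact neg_add_cancel _
  calc x*x = (2:ℂ)⁻¹ • ((2:ℂ) • (x*x)) := by rw [smul_smul]; norm_num
  _ = 0 := by rw [h2, smul_zero]

theorem invOf_mem_even {x : R} (hx : x ∈ A.even) [Invertible x] : ⅟x ∈ A.even := by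
  obtain ⟨u, v, hu, hv, huv⟩ :=
    Submodule.codisjoint_iff_exists_add_eq.mp A.isCompl.codisjoint (⅟x)
  have h1 : x*u + x*v = 1 := by rw [← mul_add, huv, mul_invOf_self]
  have hxv_odd : x*v ∈ A.odd := A.even_mul_odd x hx v hv
  have hxv_even : x*v ∈ A.even := by
    have hh : x*v = 1 - x*u := by rw [← h1]; noncomm_ring
    rw [hh]
    exact A.even.sub_mem A.one_mem (A.even_mul_even x hx u hu)
  have hv0 : x*v = 0 := (Submodule.disjoint_def.mp A.isCompl.disjoint) _ hxv_even hxv_odd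
  have hv' : ⅟x * (x*v) = 0 := by rw [hv0, mul_zero]
  rw [← mul_assoc, invOf_mul_self, one_mul] at hv'
  rw [← huv, hv', add_zero]; exact hu

end SuperCommAlgebra

theorem sc_automorphism_odd_coordinate_expression
    {R : Type*} [Ring R] [Algebra ℂ R] (A : SuperCommAlgebra R)
    (a b c d e α β γ δ z θ : R)
    (ha : a ∈ A.even) (hb : b ∈ A.even) (hc : c ∈ A.even) (hd : d ∈ A.even)
    (he : e ∈ A.even) (hz : z ∈ A.even)
    (hα : α ∈ A.odd) (hβ : β ∈ A.odd) (hγ : γ ∈ A.odd) (hδ : δ ∈ A.odd)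
    (hθ : θ ∈ A.odd)
    (h1 : a * d - b * c - γ * δ = 1)
    (h2 : e * e + 2 * (α * β) = 1)
    (h3 : c * α - a * β = e * γ)
    (h4 : d * α - b * β = e * δ)
    [Invertible (c * z + d)] [Invertible e] [Invertible (c * z + d + θ * β)] :
    (γ * z + δ + θ * e) * ⅟(c * z + d + θ * β) =
      (γ * z + δ) * ⅟(c * z + d) + θ * (1 - γ * δ) * ⅟e * ⅟(c * z + d) := by
  -- basic squares and anticommutation
  have hθθ : θ*θ = 0 := A.odd_sq hθ
  have hββ : β*β = 0 := A.odd_sq hβ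
  have hαα : α*α = 0 := A.odd_sq hα
  have hβθ : β*θ = -(θ*β) := A.odd_anticomm β hβ θ hθ
  have hβα : β*α = -(α*β) := A.odd_anticomm β hβ α hα
  -- memberships
  have hX : c*z+d ∈ A.even := A.even.add_mem (A.even_mul_even c hc z hz) hd
  have hγz : γ*z ∈ A.odd := by
    have h := A.even_mul_odd z hz γ hγ
    rwa [A.even_central z hz γ] at h
  have hG : γ*z+δ ∈ A.odd := A.odd.add_mem hγz hδ
  have hGθ : (γ*z+δ)*θ = -(θ*(γ*z+δ)) := A.odd_anticomm _ hG θ hθ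
  -- centrality
  have ce := A.even_central e he
  have cE := A.even_central _ (A.invOf_mem_even he)
  -- rearranged hypotheses
  have he2 : e*e = 1 - 2*(α*β) := by rw [← h2]; noncomm_ring
  have had : a*d - b*c = 1 + γ*δ := by rw [← h1]; noncomm_ring
  -- γδ = αβ
  have hW : (γ*δ)*(α*β) = (α*β)*(γ*δ) :=
    A.even_central _ (A.odd_mul_odd γ hγ δ hδ) (α*β)
  have hαβ2 : (α*β)*(α*β) = 0 := by
    calc (α*β)*(α*β) = α*((β*α)*β) := by noncomm_ring
    _ = α*((-(α*β))*β) := by rw [hβα]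
    _ = -((α*α)*(β*β)) := by noncomm_ring
    _ = 0 := by rw [hαα, zero_mul, neg_zero]
  have u1 : α*(d*α) = d*(α*α) := by
    rw [← mul_assoc, ← A.even_central d hd α, mul_assoc]
  have u2 : α*(b*β) = b*(α*β) := by
    rw [← mul_assoc, ← A.even_central b hb α, mul_assoc]
  have u3 : β*(d*α) = d*(β*α) := by
    rw [← mul_assoc, ← A.even_central d hd β, mul_assoc]
  have u4 : β*(b*β) = b*(β*β) := by
    rw [← mul_assoc, ← A.even_central b hb β, mul_assoc]
  have hbc : c*(b*(α*β)) = b*(c*(α*β)) := by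
    rw [← mul_assoc, A.even_central c hc b, mul_assoc]
  have heq1 : (e*e)*(γ*δ) = (a*d - b*c)*(α*β) := by
    calc (e*e)*(γ*δ) = e*((e*γ)*δ) := by noncomm_ring
    _ = e*((γ*e)*δ) := by rw [A.even_central e he γ]
    _ = (e*γ)*(e*δ) := by noncomm_ring
    _ = (c*α - a*β)*(d*α - b*β) := by rw [← h3, ← h4]
    _ = c*(α*(d*α)) - c*(α*(b*β)) - a*(β*(d*α)) + a*(β*(b*β)) := by noncomm_ring
    _ = (a*d - b*c)*(α*β) := by
        rw [u1, u2, u3, u4, hbc, hαα, hββ, hβα]; noncomm_ring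
  have heq2 : (1-2*(α*β))*(γ*δ) = (1+γ*δ)*(α*β) := by
    rw [← he2, ← had]; exact heq1
  have hz0 : (α*β)*(γ*δ) = 0 := by
    have hm : (α*β)*((1-2*(α*β))*(γ*δ)) = (α*β)*((1+γ*δ)*(α*β)) := by rw [heq2]
    calc (α*β)*(γ*δ)
        = (α*β)*((1-2*(α*β))*(γ*δ)) + 2*(((α*β)*(α*β))*(γ*δ)) := by noncomm_ring
    _ = (α*β)*((1+γ*δ)*(α*β)) + 2*(((α*β)*(α*β))*(γ*δ)) := by rw [hm]
    _ = (α*β)*(α*β) + (α*β)*((γ*δ)*(α*β)) + 2*(((α*β)*(α*β))*(γ*δ)) := by noncomm_ring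
    _ = (α*β)*(α*β) + (α*β)*((α*β)*(γ*δ)) + 2*(((α*β)*(α*β))*(γ*δ)) := by rw [hW]
    _ = ((α*β)*(α*β)) + ((α*β)*(α*β))*(γ*δ) + 2*(((α*β)*(α*β))*(γ*δ)) := by noncomm_ring
    _ = 0 := by rw [hαβ2]; noncomm_ring
  have hγδeq : γ*δ = α*β := by
    calc γ*δ = (1-2*(α*β))*(γ*δ) + 2*((α*β)*(γ*δ)) := by noncomm_ring
    _ = (1+γ*δ)*(α*β) + 2*((α*β)*(γ*δ)) := by rw [heq2]
    _ = α*β + (γ*δ)*(α*β) + 2*((α*β)*(γ*δ)) := by noncomm_ring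
    _ = α*β + (α*β)*(γ*δ) + 2*((α*β)*(γ*δ)) := by rw [hW]
    _ = α*β := by rw [hz0]; noncomm_ring
  -- the key derived relation e (γz+δ) β = (cz+d) αβ
  have hA' : α*(z*β) = z*(α*β) := by
    rw [← mul_assoc, ← A.even_central z hz α, mul_assoc]
  have hB' : β*(z*β) = 0 := by
    rw [← mul_assoc, ← A.even_central z hz β, mul_assoc, hββ, mul_zero]
  have hrel : e*((γ*z+δ)*β) = (c*z+d)*(α*β) := by
    calc e*((γ*z+δ)*β) = (e*γ)*(z*β) + (e*δ)*β := by noncomm_ring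
    _ = (c*α - a*β)*(z*β) + (d*α - b*β)*β := by rw [← h3, ← h4]
    _ = c*(α*(z*β)) - a*(β*(z*β)) + d*(α*β) - b*(β*β) := by noncomm_ring
    _ = c*(z*(α*β)) - a*0 + d*(α*β) - b*0 := by rw [hA', hB', hββ]
    _ = (c*z+d)*(α*β) := by noncomm_ring
  have hGβ : (γ*z+δ)*β = ⅟e*((c*z+d)*(α*β)) := by
    rw [← hrel, ← mul_assoc, invOf_mul_self, one_mul]
  -- abbreviation
  set Y := ⅟(c*z+d) with hY
  have hYe : Y ∈ A.even := by rw [hY]; exact A.invOf_mem_even hX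
  have cY := A.even_central Y hYe
  have hXY : (c*z+d)*Y = 1 := by rw [hY]; exact mul_invOf_self _
  -- inverse of the perturbed element
  have key_inv : ⅟(c*z+d+θ*β) = Y - Y*(θ*β)*Y := by
    apply invOf_eq_right_inv
    calc (c*z+d+θ*β)*(Y - Y*(θ*β)*Y)
        = (c*z+d)*Y - ((c*z+d)*Y)*((θ*β)*Y) + (θ*β)*Y - (θ*β)*((Y*θ)*(β*Y)) := by
          noncomm_ring
    _ = (c*z+d)*Y - ((c*z+d)*Y)*((θ*β)*Y) + (θ*β)*Y - (θ*β)*((θ*Y)*(β*Y)) := by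
          rw [cY θ]
    _ = (c*z+d)*Y - ((c*z+d)*Y)*((θ*β)*Y) + (θ*β)*Y - θ*((β*θ)*(Y*(β*Y))) := by
          noncomm_ring
    _ = (c*z+d)*Y - ((c*z+d)*Y)*((θ*β)*Y) + (θ*β)*Y - θ*((-(θ*β))*(Y*(β*Y))) := by
          rw [hβθ]
    _ = (c*z+d)*Y - ((c*z+d)*Y)*((θ*β)*Y) + (θ*β)*Y + (θ*θ)*(β*(Y*(β*Y))) := by
          noncomm_ring
    _ = 1 - 1*((θ*β)*Y) + (θ*β)*Y + 0*(β*(Y*(β*Y))) := by rw [hXY, hθθ]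
    _ = 1 := by noncomm_ring
  have m3b : ((c*z+d)*(α*β))*(Y*Y) = (α*β)*Y := by
    calc ((c*z+d)*(α*β))*(Y*Y) = ((c*z+d)*((α*β)*Y))*Y := by noncomm_ring
    _ = ((c*z+d)*(Y*(α*β)))*Y := by rw [← cY (α*β)]
    _ = (((c*z+d)*Y)*(α*β))*Y := by noncomm_ring
    _ = (α*β)*Y := by rw [hXY, one_mul]
  have hee' : e*Y = (1-2*(α*β))*(⅟e*Y) := by
    rw [← he2, mul_assoc, ← mul_assoc e ⅟e, mul_invOf_self, one_mul]
  have hEab : ⅟e*((α*β)*Y) = (α*β)*(⅟e*Y) := by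
    rw [← mul_assoc, cE (α*β), mul_assoc]
  rw [hγδeq, key_inv]
  calc (γ*z+δ+θ*e) * (Y - Y*(θ*β)*Y)
      = (γ*z+δ)*Y + θ*(e*Y) - (γ*z+δ)*((Y*θ)*(β*Y)) - θ*((e*(Y*θ))*(β*Y)) := by
        noncomm_ring
  _ = (γ*z+δ)*Y + θ*(e*Y) - (γ*z+δ)*((θ*Y)*(β*Y)) - θ*((e*(θ*Y))*(β*Y)) := by
        rw [cY θ]
  _ = (γ*z+δ)*Y + θ*(e*Y) - ((γ*z+δ)*θ)*((Y*β)*Y) - (θ*(e*θ))*((Y*β)*Y) := by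
        noncomm_ring
  _ = (γ*z+δ)*Y + θ*(e*Y) - (-(θ*(γ*z+δ)))*((β*Y)*Y) - (θ*(θ*e))*((β*Y)*Y) := by
        rw [hGθ, cY β, ce θ]
  _ = (γ*z+δ)*Y + θ*(e*Y) + θ*(((γ*z+δ)*β)*(Y*Y)) - (θ*θ)*(e*((β*Y)*Y)) := by
        noncomm_ring
  _ = (γ*z+δ)*Y + θ*(e*Y) + θ*((⅟e*((c*z+d)*(α*β)))*(Y*Y)) - 0*(e*((β*Y)*Y)) := by
        rw [hGβ, hθθ]
  _ = (γ*z+δ)*Y + θ*(e*Y) + θ*(⅟e*(((c*z+d)*(α*β))*(Y*Y))) := by noncomm_ring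
  _ = (γ*z+δ)*Y + θ*((1-2*(α*β))*(⅟e*Y)) + θ*(⅟e*((α*β)*Y)) := by rw [m3b, hee']
  _ = (γ*z+δ)*Y + θ*((1-2*(α*β))*(⅟e*Y)) + θ*((α*β)*(⅟e*Y)) := by rw [hEab]
  _ = (γ*z+δ)*Y + θ*(1-α*β)*⅟e*Y := by noncomm_ring
end
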